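/- arXiv:1908.07373 — 4 statements merged into one kernel-verified Lean document; each statement's English description precedes it below -/
import Mathlib

section
/- The inverse of the lower-triangular matrix with (i,j) entry binom(2j+1, 2i+1) for 0 ≤ i, j ≤ m is the matrix with (i,j) entry binom(2j+1, 2i+1)·E_{2j-2i}, where E_n are the Euler numbers. -/
/-!
By the trinomial revision `C(2j+1, 2k+1) C(2k+1, 2i+1) = C(2j+1, 2i+1) C(2j-2i, 2k-2i)`, the
`(i, j)` entry of `A * B` is `C(2j+1, 2i+1)` times `∑ₖ C(2n, 2k) E(2n-2k)` with `n = j - i`, which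
after reflecting `k ↦ n - k` is the defining recurrence of the Euler numbers, i.e. `[n = 0]`.
A one-sided inverse of a square matrix is two-sided.
-/

open Finset

theorem Nat.choose_two_mul_add_one_mul_choose (i d j : ℕ) :
    (2 * j + 1).choose (2 * (i + d) + 1) * (2 * (i + d) + 1).choose (2 * i + 1)
      = (2 * j + 1).choose (2 * i + 1) * (2 * j - 2 * i).choose (2 * d) := by
  rw [Nat.choose_mul (by omega)]
  congr 2 <;> omega

section EvenBinomialInverse

variable {R : Type*} [CommSemiring R] (E : ℕ → R)

theorem sum_range_choose_two_mul_mul_reflect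
    (hE : ∀ n, ∑ k ∈ range (n + 1), ((2 * n).choose (2 * k) : R) * E (2 * k)
      = if n = 0 then 1 else 0) (n : ℕ) :
    ∑ d ∈ range (n + 1), ((2 * n).choose (2 * d) : R) * E (2 * n - 2 * d)
      = if n = 0 then 1 else 0 := by
  rw [← hE n, ← sum_range_reflect]
  refine sum_congr rfl fun d hd => ?_
  have hdn : d ≤ n := Nat.lt_succ_iff.mp (mem_range.mp hd)
  rw [show 2 * (n + 1 - 1 - d) = 2 * n - 2 * d by omega, Nat.choose_symm (by omega),
    Nat.sub_sub_self (by omega)]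

theorem sum_range_choose_odd_mul_choose_odd_mul
    (hE : ∀ n, ∑ k ∈ range (n + 1), ((2 * n).choose (2 * k) : R) * E (2 * k)
      = if n = 0 then 1 else 0) {m i j : ℕ} (hj : j ≤ m) :
    ∑ k ∈ range (m + 1),
        ((2 * k + 1).choose (2 * i + 1) : R) * ((2 * j + 1).choose (2 * k + 1) * E (2 * j - 2 * k))
      = if i = j then 1 else 0 := by
  have hsupp : Ico i (j + 1) ⊆ range (m + 1) := fun k hk => by
    simp only [mem_Ico, mem_range] at hk ⊢; omega
  rw [← sum_subset hsupp fun k _ hk => ?vanish]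
  case vanish =>
    simp only [mem_Ico, not_and_or, not_le, not_lt] at hk
    rcases hk with hki | hkj
    · rw [Nat.choose_eq_zero_of_lt (by omega : 2 * k + 1 < 2 * i + 1), Nat.cast_zero, zero_mul]
    · rw [Nat.choose_eq_zero_of_lt (by omega : 2 * j + 1 < 2 * k + 1), Nat.cast_zero, zero_mul,
        mul_zero]
  rcases lt_or_ge j i with hji | hij
  · rw [Ico_eq_empty (by omega), sum_empty, if_neg (by omega)]
  calc ∑ k ∈ Ico i (j + 1), ((2 * k + 1).choose (2 * i + 1) : R) *
          ((2 * j + 1).choose (2 * k + 1) * E (2 * j - 2 * k))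
      = ∑ d ∈ range (j - i + 1), ((2 * j + 1).choose (2 * i + 1) : R) *
          ((2 * (j - i)).choose (2 * d) * E (2 * (j - i) - 2 * d)) := by
        rw [sum_Ico_eq_sum_range, show j + 1 - i = j - i + 1 by omega]
        refine sum_congr rfl fun d _ => ?_
        rw [show 2 * j - 2 * (i + d) = 2 * (j - i) - 2 * d by omega, ← mul_assoc, ← mul_assoc,
          ← Nat.cast_mul, mul_comm ((2 * (i + d) + 1).choose _),
          Nat.choose_two_mul_add_one_mul_choose, show 2 * j - 2 * i = 2 * (j - i) by omega,
          Nat.cast_mul]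
    _ = if i = j then 1 else 0 := by
        rw [← mul_sum, sum_range_choose_two_mul_mul_reflect E hE]
        by_cases h : i = j
        · subst h; simp
        · rw [if_neg (by omega), if_neg h, mul_zero]

end EvenBinomialInverse

theorem odd_binomial_matrix_inverse_general (m : ℕ) (E : ℕ → ℚ)
    (hE : ∀ n, ∑ k ∈ Finset.range (n + 1), ((2 * n).choose (2 * k) : ℚ) * E (2 * k)
      = if n = 0 then 1 else 0)
    (A B : Matrix (Fin (m + 1)) (Fin (m + 1)) ℚ)
    (hA : ∀ i j, A i j = ((2 * (j : ℕ) + 1).choose (2 * (i : ℕ) + 1) : ℚ))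
    (hB : ∀ i j, B i j = ((2 * (j : ℕ) + 1).choose (2 * (i : ℕ) + 1) : ℚ)
      * E (2 * (j : ℕ) - 2 * (i : ℕ))) :
    A * B = 1 ∧ B * A = 1 := by
  have hAB : A * B = 1 := by
    ext i j
    simp only [Matrix.mul_apply, Matrix.one_apply, hA, hB, ← Fin.val_inj]
    exact (Fin.sum_univ_eq_sum_range (fun k => ((2 * k + 1).choose (2 * (i : ℕ) + 1) : ℚ) *
      ((2 * (j : ℕ) + 1).choose (2 * k + 1) * E (2 * (j : ℕ) - 2 * k))) (m + 1)).trans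
      (sum_range_choose_odd_mul_choose_odd_mul E hE j.is_le)
  exact ⟨hAB, mul_eq_one_comm.mp hAB⟩

/-- The inverse of the lower-triangular matrix with (i,j) entry
`binom(2j+1, 2i+1)` for `0 ≤ i, j ≤ m` is the matrix with (i,j) entry
`binom(2j+1, 2i+1) · E_{2j-2i}`, where `E` are the Euler numbers. -/
theorem odd_binomial_matrix_inverse (m : ℕ) (E : ℕ → ℚ)
    (hodd : ∀ n, E (2 * n + 1) = 0)
    (hE : ∀ n, ∑ k ∈ Finset.range (n + 1), ((2 * n).choose (2 * k) : ℚ) * E (2 * k)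
      = if n = 0 then 1 else 0)
    (A B : Matrix (Fin (m + 1)) (Fin (m + 1)) ℚ)
    (hA : ∀ i j, A i j = ((2 * (j : ℕ) + 1).choose (2 * (i : ℕ) + 1) : ℚ))
    (hB : ∀ i j, B i j = ((2 * (j : ℕ) + 1).choose (2 * (i : ℕ) + 1) : ℚ)
      * E (2 * (j : ℕ) - 2 * (i : ℕ))) :
    A * B = 1 ∧ B * A = 1 :=
  odd_binomial_matrix_inverse_general m E hE A B hA hB
end

section
/- If a family of classes satisfies Φ_r = Σ_{i=0}^{(n-r)/2} binom(r+2i, r)·s_{r+2i} for all r with 0 ≤ r ≤ n and n−r even (in an abelian group), then s_r = Σ_{i=0}^{(n-r)/2} binom(r+2i, r)·E_{2i}·Φ_{r+2i} for all such r, where E_n are the Euler numbers. -/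
open Finset

/-!
Substituting the hypothesis for each `Φ_{r+2i}` turns the right-hand side into a double sum
over pairs `i + j = k`. Since `C(r+2k, r+2i) C(r+2i, r) = C(r+2k, r) C(2k, 2i)`, the coefficient
of `s_{r+2k}` is `C(r+2k, r) · Σ_i C(2k, 2i) E_{2i}`, which the Euler recursion makes `[k = 0]`.
-/

theorem Nat.choose_add_mul_choose_add (r a b : ℕ) :
    (r + b).choose (r + a) * (r + a).choose r = (r + b).choose r * b.choose a := by
  simpa using Nat.choose_mul (n := r + b) (k := r + a) (s := r) (by omega)

section EulerInversion

universe u v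

variable {R : Type u} {V : Type v} [CommRing R] [AddCommGroup V] [Module R V] {E : ℕ → R}

theorem sum_choose_mul_choose_mul_euler_eq_ite
    (hE : ∀ m, ∑ k ∈ range (m + 1), ((2 * m).choose (2 * k) : R) * E (2 * k)
      = if m = 0 then 1 else 0) (r k : ℕ) :
    ∑ i ∈ range (k + 1), ((r + 2 * k).choose (r + 2 * i) * (r + 2 * i).choose r : R) * E (2 * i)
      = if k = 0 then 1 else 0 := by
  calc ∑ i ∈ range (k + 1),
        ((r + 2 * k).choose (r + 2 * i) * (r + 2 * i).choose r : R) * E (2 * i)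
      = ∑ i ∈ range (k + 1), ((r + 2 * k).choose r : R) * (((2 * k).choose (2 * i)) * E (2 * i)) := by
        refine sum_congr rfl fun i _ => ?_
        have hchoose := Nat.choose_add_mul_choose_add r (2 * i) (2 * k)
        rw [← mul_assoc]
        exact_mod_cast congrArg (fun c : ℕ => (c : R) * E (2 * i)) hchoose
    _ = if k = 0 then 1 else 0 := by
        rw [← mul_sum, hE k]
        split_ifs with hk <;> simp [hk]

theorem sum_choose_mul_euler_smul_eq_of_forall_eq_sum {Φ s : ℕ → V}
    (hE : ∀ m, ∑ k ∈ range (m + 1), ((2 * m).choose (2 * k) : R) * E (2 * k)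
      = if m = 0 then 1 else 0) {r m : ℕ}
    (hΦ : ∀ i ≤ m, Φ (r + 2 * i) = ∑ j ∈ range (m - i + 1),
      ((r + 2 * i + 2 * j).choose (r + 2 * i) : R) • s (r + 2 * i + 2 * j)) :
    ∑ i ∈ range (m + 1), (((r + 2 * i).choose r : R) * E (2 * i)) • Φ (r + 2 * i) = s r := by
  set f : ℕ → ℕ → V := fun i j =>
    (((r + 2 * i + 2 * j).choose (r + 2 * i) * (r + 2 * i).choose r : R) * E (2 * i)) •
      s (r + 2 * i + 2 * j)
  calc ∑ i ∈ range (m + 1), (((r + 2 * i).choose r : R) * E (2 * i)) • Φ (r + 2 * i)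
      = ∑ i ∈ range (m + 1), ∑ j ∈ range (m + 1 - i), f i j := by
        refine sum_congr rfl fun i hi => ?_
        rw [mem_range] at hi
        rw [hΦ i (by omega), smul_sum, show m + 1 - i = m - i + 1 by omega]
        refine sum_congr rfl fun j _ => ?_
        rw [smul_smul]
        congr 1
        ring
    _ = ∑ k ∈ range (m + 1), ∑ i ∈ range (k + 1), f i (k - i) := (sum_range_diag_flip _ f).symm
    _ = ∑ k ∈ range (m + 1), (if k = 0 then (1 : R) else 0) • s (r + 2 * k) := by
        refine sum_congr rfl fun k _ => ?_
        rw [← sum_choose_mul_choose_mul_euler_eq_ite hE r k, sum_smul]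
        refine sum_congr rfl fun i hi => ?_
        rw [mem_range] at hi
        dsimp only [f]
        rw [show r + 2 * i + 2 * (k - i) = r + 2 * k by omega]
    _ = s r := by simp

/-- If `Φ_r = Σ_{i=0}^{(n-r)/2} binom(r+2i,r)·s_{r+2i}` for all `0 ≤ r ≤ n`
with `n−r` even, then `s_r = Σ_{i=0}^{(n-r)/2} binom(r+2i,r)·E_{2i}·Φ_{r+2i}` for all such `r`. -/
theorem sieve_inversion_skew (n : ℕ) (V : Type*) [AddCommGroup V] [Module ℚ V]
    (E : ℕ → ℚ)
    (hE : ∀ m, ∑ k ∈ Finset.range (m + 1), ((2 * m).choose (2 * k) : ℚ) * E (2 * k)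
      = if m = 0 then 1 else 0)
    (Φ s : ℕ → V)
    (hΦ : ∀ r, r ≤ n → Even (n - r) →
      Φ r = ∑ i ∈ Finset.range ((n - r) / 2 + 1), ((r + 2 * i).choose r : ℚ) • s (r + 2 * i)) :
    ∀ r, r ≤ n → Even (n - r) →
      s r = ∑ i ∈ Finset.range ((n - r) / 2 + 1),
        (((r + 2 * i).choose r : ℚ) * E (2 * i)) • Φ (r + 2 * i) := by
  intro r hr ⟨m, hm⟩
  rw [show (n - r) / 2 = m by omega]
  refine (sum_choose_mul_euler_smul_eq_of_forall_eq_sum hE fun i hi => ?_).symm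
  have h := hΦ (r + 2 * i) (by omega) ⟨m - i, by omega⟩
  rwa [show (n - (r + 2 * i)) / 2 = m - i by omega] at h
end EulerInversion
end

section
/- The operation J on polynomials defined by J(p)(t) = (t·p(−t−1) + p(0))/(t+1) is a well-defined degree-preserving linear involution: for every polynomial p, (t+1) divides t·p(−t−1) + p(0), deg J(p) = deg p, and J(J(p)) = p. -/
open Polynomial

noncomputable def aluffiJ (p : Polynomial ℚ) : Polynomial ℚ :=
  (X * p.comp (-(X + 1)) + C (p.eval 0)) /ₘ (X + 1)

private lemma monicX1 : (X + 1 : Polynomial ℚ).Monic := by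
  simpa using monic_X_add_C (1 : ℚ)

private lemma aluffi_dvd (p : Polynomial ℚ) :
    (X + 1) ∣ (X * p.comp (-(X + 1)) + C (p.eval 0)) := by
  have : (X + 1 : Polynomial ℚ) = X - C (-1) := by simp
  rw [this, dvd_iff_isRoot]
  simp [IsRoot, eval_comp]

private lemma aluffi_key (p : Polynomial ℚ) :
    (X + 1) * aluffiJ p = X * p.comp (-(X + 1)) + C (p.eval 0) := by
  have h := modByMonic_add_div (X * p.comp (-(X + 1)) + C (p.eval 0)) (X + 1)
  rwa [(modByMonic_eq_zero_iff_dvd monicX1).2 (aluffi_dvd p), zero_add] at h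

private lemma comp_ne (p : Polynomial ℚ) (hp : p ≠ 0) : p.comp (-(X + 1)) ≠ 0 := by
  intro h
  apply hp
  have : (p.comp (-(X + 1))).comp (-(X + 1)) = p := by
    rw [comp_assoc]
    simp
  rw [h, zero_comp] at this
  exact this.symm

private lemma numer_degree (p : Polynomial ℚ) (hp : p ≠ 0) :
    (X * p.comp (-(X + 1)) + C (p.eval 0)).degree = 1 + p.degree := by
  have hc : (p.comp (-(X + 1))).degree = p.degree := by
    have h1 : (-(X + 1) : Polynomial ℚ).natDegree = 1 := by
      rw [natDegree_neg]; simpa using natDegree_X_add_C (1 : ℚ)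
    rw [degree_eq_natDegree hp, degree_eq_natDegree (comp_ne p hp),
      natDegree_comp, h1, mul_one]
  have hX : (X * p.comp (-(X + 1))).degree = 1 + p.degree := by
    rw [degree_mul, degree_X, hc]
  rw [degree_add_eq_left_of_degree_lt, hX]
  rw [hX]
  refine lt_of_le_of_lt (degree_C_le) ?_
  have : (0 : WithBot ℕ) < 1 + p.degree := by
    rw [degree_eq_natDegree hp]
    exact_mod_cast Nat.add_pos_left Nat.one_pos _
  exact this

private lemma X1_ne : (X + 1 : Polynomial ℚ) ≠ 0 := monicX1.ne_zero

/-- `J` is a well-defined degree-preserving linear involution: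
`(t+1)` divides `t·p(−t−1) + p(0)`, `deg J(p) = deg p`, `J(J(p)) = p`, and `J` is linear. -/
theorem aluffiJ_involution :
    (∀ p : Polynomial ℚ, (X + 1) ∣ (X * p.comp (-(X + 1)) + C (p.eval 0))) ∧
    (∀ p : Polynomial ℚ, (aluffiJ p).degree = p.degree) ∧
    (∀ p : Polynomial ℚ, aluffiJ (aluffiJ p) = p) ∧
    (∀ p q : Polynomial ℚ, aluffiJ (p + q) = aluffiJ p + aluffiJ q) ∧
    (∀ (c : ℚ) (p : Polynomial ℚ), aluffiJ (C c * p) = C c * aluffiJ p) := by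
  refine ⟨aluffi_dvd, ?_, ?_, ?_, ?_⟩
  · intro p
    by_cases hp : p = 0
    · subst hp; simp [aluffiJ]
    · have h := congrArg degree (aluffi_key p)
      rw [degree_mul, numer_degree p hp] at h
      have hd : (X + 1 : Polynomial ℚ).degree = 1 := by
        simpa using degree_X_add_C (1 : ℚ)
      rw [hd] at h
      exact WithBot.add_left_cancel (by simp) h
  · intro p
    set q := aluffiJ p with hq
    have h1 : q.eval 0 = p.eval 0 := by
      have := congrArg (eval 0) (aluffi_key p)
      simpa [eval_comp] using this
    have hs : (-(X + 1) : Polynomial ℚ).comp (-(X + 1)) = X := by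
      simp [add_comp]
    have h2 : X * q.comp (-(X + 1)) + C (q.eval 0) = (X + 1) * p := by
      have := congrArg (fun f => f.comp (-(X + 1))) (aluffi_key p)
      simp only [mul_comp, add_comp, X_comp, C_comp, one_comp, neg_comp] at this
      rw [comp_assoc, hs, comp_X] at this
      rw [h1]
      linear_combination (-1 : Polynomial ℚ) * this
    unfold aluffiJ
    rw [h2]
    exact mul_divByMonic_cancel_left p monicX1
  · intro p q
    apply mul_left_cancel₀ X1_ne
    rw [aluffi_key, mul_add, aluffi_key, aluffi_key]
    simp only [add_comp, eval_add, C_add]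
    ring
  · intro c p
    apply mul_left_cancel₀ X1_ne
    rw [aluffi_key]
    simp only [mul_comp, C_comp, eval_mul, eval_C, C_mul]
    linear_combination (-(C c)) * aluffi_key p
end

section
/- The symmetric W-function W^S_{2,0}(α₁,α₂) equals 1 + α₁ + α₂ + 4α₁α₂, i.e. 1 + c₁ + 4c₂ in elementary symmetric polynomials. -/
open Finset

noncomputable section

/-- The field of rational functions `ℚ(α₁, α₂)`. -/
abbrev F2 := FractionRing (MvPolynomial (Fin 2) ℚ)

/-- The variables `α i` as elements of `ℚ(α₁, α₂)`. -/
def α (i : Fin 2) : F2 := algebraMap (MvPolynomial (Fin 2) ℚ) F2 (MvPolynomial.X i)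

/-- The symmetrized rational function `W^S_2(α₁,α₂)`:
`(1/⌊1⌋!) Σ_{τ∈S₂} τ·( (1+α₁+α₂)(α₁+α₂)/(α₁−α₂)
  · (−α₂)(1+2α₁)(1−α₁+α₂)/((α₁+α₂)(1+α₁+α₂)) )`. -/
def WS2 : F2 :=
  (1 / ((Nat.factorial 1 : ℕ) : F2)) *
    ∑ τ : Equiv.Perm (Fin 2),
      ((1 + α (τ 0) + α (τ 1)) * (α (τ 0) + α (τ 1)) / (α (τ 0) - α (τ 1))) *
        ((-α (τ 1)) * (1 + 2 * α (τ 0)) * (1 - α (τ 0) + α (τ 1)) /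
          ((α (τ 0) + α (τ 1)) * (1 + α (τ 0) + α (τ 1))))

lemma MvPolynomial.algebraMap_ne_zero_of_eval_ne_zero {σ R K : Type*} [CommRing R] [CommRing K]
    [Algebra (MvPolynomial σ R) K] [IsFractionRing (MvPolynomial σ R) K]
    {p : MvPolynomial σ R} (v : σ → R) (h : MvPolynomial.eval v p ≠ 0) :
    algebraMap (MvPolynomial σ R) K p ≠ 0 :=
  (map_ne_zero_iff _ (IsFractionRing.injective _ K)).mpr fun hp => h (by simp [hp])

lemma Equiv.Perm.sum_fin_two {M : Type*} [AddCommMonoid M] (f : Equiv.Perm (Fin 2) → M) :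
    ∑ τ, f τ = f 1 + f (Equiv.swap 0 1) := by
  rw [show (univ : Finset (Equiv.Perm (Fin 2))) = {1, Equiv.swap 0 1} by decide,
    sum_pair (by decide)]

def wTerm {K : Type*} [Field K] (x y : K) : K :=
  ((1 + x + y) * (x + y) / (x - y)) *
    ((-y) * (1 + 2 * x) * (1 - x + y) / ((x + y) * (1 + x + y)))

/-- The poles at `x + y = 0` and `1 + x + y = 0` cancel inside each term; the one at `x = y`
cancels between the two terms because the symmetrized numerator is divisible by `x - y`. -/
lemma wTerm_add_wTerm_swap {K : Type*} [Field K] {x y : K} (hxy : x - y ≠ 0)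
    (hs : x + y ≠ 0) (hs1 : 1 + x + y ≠ 0) :
    wTerm x y + wTerm y x = 1 + x + y + 4 * (x * y) := by
  have hyx : y - x ≠ 0 := by rwa [← neg_sub, neg_ne_zero]
  have hs' : y + x ≠ 0 := by rwa [add_comm]
  have hs1' : 1 + y + x ≠ 0 := by rwa [add_right_comm]
  unfold wTerm
  field_simp
  ring

lemma α_sub_ne_zero : α 0 - α 1 ≠ 0 := by
  simpa [α] using MvPolynomial.algebraMap_ne_zero_of_eval_ne_zero (K := F2)
    (p := .X 0 - .X 1) ![(1 : ℚ), 2] (by norm_num)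

lemma α_add_ne_zero : α 0 + α 1 ≠ 0 := by
  simpa [α] using MvPolynomial.algebraMap_ne_zero_of_eval_ne_zero (K := F2)
    (p := .X 0 + .X 1) ![(1 : ℚ), 2] (by norm_num)

lemma one_add_α_add_ne_zero : 1 + α 0 + α 1 ≠ 0 := by
  simpa [α] using MvPolynomial.algebraMap_ne_zero_of_eval_ne_zero (K := F2)
    (p := 1 + .X 0 + .X 1) ![(1 : ℚ), 2] (by norm_num)

/-- `W^S_{2,0}(α₁,α₂) = W^S_2(α₁,α₂) = 1 + α₁ + α₂ + 4α₁α₂ = 1 + c₁ + 4c₂`. -/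
theorem WS20_value : WS2 = 1 + α 0 + α 1 + 4 * (α 0 * α 1) := by
  have hWS2 : WS2 = ∑ τ : Equiv.Perm (Fin 2), wTerm (α (τ 0)) (α (τ 1)) := by
    simp [WS2, wTerm]
  rw [hWS2, Equiv.Perm.sum_fin_two]
  simpa using wTerm_add_wTerm_swap α_sub_ne_zero α_add_ne_zero one_add_α_add_ne_zero

end
end
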